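/- Let κ ≥ 2 be an integer and x, y ∈ [-1,1]. Then the equality U_{ακ-1}(x)·U_{βκ-1}(y) = U_{ακ-1}(y)·U_{βκ-1}(x) holds for all positive integers α, β if and only if U_{κ-1}(x) = 0, or U_{κ-1}(y) = 0, or T_κ(x) = T_κ(y). -/

import Mathlib

open Polynomial Polynomial.Chebyshev Set

/-!
The identity `2 U_m T_k = U_{m+k} + U_{m-k}` (the polynomial form of
`2 sin ((m+1)θ) cos (kθ) = sin ((m+k+1)θ) + sin ((m-k+1)θ)`) yields, by induction on `α`, the
factorisation `U_{ακ-1} = (U_{α-1} ∘ T_κ) · U_{κ-1}`. Hence both sides of the identity carry the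
common factor `U_{κ-1}(x) U_{κ-1}(y)`. If it vanishes there is nothing to prove; otherwise the
identity becomes `U_{α-1}(T_κ x) U_{β-1}(T_κ y) = U_{α-1}(T_κ y) U_{β-1}(T_κ x)`, which holds for
all `α, β` when `T_κ x = T_κ y` and, for `α = 2, β = 1`, reads `2 T_κ x = 2 T_κ y`.
-/

namespace Polynomial.Chebyshev

variable (R : Type*) [CommRing R]

theorem U_mul_T (m k : ℤ) : 2 * U R m * T R k = U R (m + k) + U R (m - k) := by
  induction k using Polynomial.Chebyshev.induct with
  | zero => simp [two_mul]
  | one => rw [T_one, U_add_one, U_sub_one]; ring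
  | add_two k ih1 ih2 =>
    have h₁ := U_add_two R (m + k)
    have h₂ := U_sub_two R (m - k)
    have h₃ := T_add_two R k
    linear_combination (norm := ring_nf) 2 * U R m * h₃ - h₂ - h₁ - ih2 + 2 * (X : R[X]) * ih1
  | neg_add_one k ih1 ih2 =>
    have h₁ := U_add_two R (m + (-k - 1))
    have h₂ := U_sub_two R (m - (-k - 1))
    have h₃ := T_add_two R (-k - 1)
    linear_combination (norm := ring_nf) 2 * U R m * h₃ - h₂ - h₁ - ih2 + 2 * (X : R[X]) * ih1

theorem U_mul_sub_one (m n : ℤ) :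
    U R (m * n - 1) = (U R (m - 1)).comp (T R n) * U R (n - 1) := by
  induction m using Polynomial.Chebyshev.induct with
  | zero => simp
  | one => simp
  | add_two m ih1 ih2 =>
    have h₁ := U_mul_T R ((m + 1) * n - 1) n
    have h₂ := congr_arg (comp · (T R n)) <| U_add_two R (m - 1)
    simp only [sub_comp, mul_comp, ofNat_comp, X_comp] at h₂
    linear_combination (norm := ring_nf) -ih2 - h₂ * U R (n - 1) - h₁ + 2 * T R n * ih1
  | neg_add_one m ih1 ih2 =>
    have h₁ := U_mul_T R ((-m) * n - 1) n
    have h₂ := congr_arg (comp · (T R n)) <| U_add_two R (-m - 2)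
    simp only [sub_comp, mul_comp, ofNat_comp, X_comp] at h₂
    linear_combination (norm := ring_nf) -ih2 - h₂ * U R (n - 1) - h₁ + 2 * T R n * ih1

theorem eval_U_natCast_mul_sub_one (m n : ℕ) (x : R) :
    (U R ((m * n : ℕ) - 1 : ℤ)).eval x =
      (U R ((m : ℤ) - 1)).eval ((T R n).eval x) * (U R ((n : ℤ) - 1)).eval x := by
  rw [Nat.cast_mul, U_mul_sub_one, eval_mul, eval_comp]

end Polynomial.Chebyshev

theorem chebyshev_U_comm_iff_general (κ : ℕ) (x y : ℝ) :
    (∀ α β : ℕ, 0 < α → 0 < β →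
        (U ℝ ((α * κ : ℕ) - 1 : ℤ)).eval x * (U ℝ ((β * κ : ℕ) - 1 : ℤ)).eval y =
          (U ℝ ((α * κ : ℕ) - 1 : ℤ)).eval y * (U ℝ ((β * κ : ℕ) - 1 : ℤ)).eval x) ↔
      (U ℝ ((κ : ℤ) - 1)).eval x = 0 ∨ (U ℝ ((κ : ℤ) - 1)).eval y = 0 ∨
        (T ℝ κ).eval x = (T ℝ κ).eval y := by
  simp only [eval_U_natCast_mul_sub_one]
  constructor
  · intro h
    refine or_iff_not_imp_left.2 fun hx ↦ or_iff_not_imp_left.2 fun hy ↦ ?_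
    have h21 := h 2 1 two_pos one_pos
    simp only [Nat.cast_ofNat, Int.reduceSub, U_one, eval_mul, eval_ofNat, eval_X, Nat.cast_one,
      sub_self, U_zero, eval_one, one_mul] at h21
    refine mul_right_cancel₀ (mul_ne_zero hx hy) ?_
    linear_combination h21 / 2
  · rintro (h | h | h) α β - - <;> simp only [h] <;> ring

/-- For `κ ≥ 2` and `x, y ∈ [-1,1]`:
`U_{ακ-1}(x)·U_{βκ-1}(y) = U_{ακ-1}(y)·U_{βκ-1}(x)` holds for all positive
integers `α, β` iff `U_{κ-1}(x) = 0`, or `U_{κ-1}(y) = 0`, or `T_κ(x) = T_κ(y)`. -/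
theorem chebyshev_U_comm_iff (κ : ℕ) (hκ : 2 ≤ κ) (x y : ℝ)
    (hx : x ∈ Icc (-1 : ℝ) 1) (hy : y ∈ Icc (-1 : ℝ) 1) :
    (∀ α β : ℕ, 0 < α → 0 < β →
        (U ℝ ((α * κ : ℕ) - 1 : ℤ)).eval x * (U ℝ ((β * κ : ℕ) - 1 : ℤ)).eval y =
          (U ℝ ((α * κ : ℕ) - 1 : ℤ)).eval y * (U ℝ ((β * κ : ℕ) - 1 : ℤ)).eval x) ↔
      (U ℝ ((κ : ℤ) - 1)).eval x = 0 ∨ (U ℝ ((κ : ℤ) - 1)).eval y = 0 ∨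
        (T ℝ κ).eval x = (T ℝ κ).eval y :=
  chebyshev_U_comm_iff_general κ x y
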